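/- Let κ₀ ∈ ℝ and κ₁ > 0 with (κ₀ + 1)/κ₁ ∈ (−1/4, 1/4), and set θ* = 3/4 + (κ₀ + 1)/κ₁. Then θ* ∈ (1/2, 1), and for every θ ∈ (1/2, 1) one has τ(θ)^{θ−1} ≤ τ(θ*)^{θ*−1}; that is, the function θ ↦ τ(θ)^{θ−1} attains its maximum over (1/2, 1) at θ*. -/

import Mathlib

/-! Since `τ(θ)` is an exponential whose exponent has the denominator `1 − θ`, raising it to the
power `θ − 1` gives `exp g(θ)` with `g(θ) = (1 + κ₀)(θ − 1) + r(θ)/2`, a quadratic in `θ` with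
leading coefficient `−κ₁/2 < 0`. Completing the square shows that its vertex is
`θ* = 3/4 + (κ₀ + 1)/κ₁`, and the hypothesis on `(κ₀ + 1)/κ₁` places `θ*` inside `(1/2, 1)`. -/

/-- `r(θ) = 1 − κ₁(θ − 1/2)(θ − 1)`. -/
noncomputable def rfun (κ₁ θ : ℝ) : ℝ := 1 - κ₁ * (θ - 1/2) * (θ - 1)

/-- `τ(θ) = exp(1 + κ₀ − r(θ)/(2(1 − θ)))`. -/
noncomputable def tau (κ₀ κ₁ θ : ℝ) : ℝ :=
  Real.exp (1 + κ₀ - rfun κ₁ θ / (2 * (1 - θ)))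

/-- The constant `ϱ(κ₀,κ₁)` from formula (5.3) of the paper. -/
noncomputable def varrho (κ₀ κ₁ : ℝ) : ℝ :=
  if (κ₀ + 1) / κ₁ > 1/4 then Real.exp (1/2)
  else if (κ₀ + 1) / κ₁ < -(1/4) then Real.exp (-κ₀ / 2)
  else Real.exp ((16 * κ₀ ^ 2 - 8 * κ₀ * (κ₁ - 4) + (4 + κ₁) ^ 2) / (32 * κ₁))

noncomputable def tauRpowExponent (κ₀ κ₁ θ : ℝ) : ℝ := (1 + κ₀) * (θ - 1) + rfun κ₁ θ / 2

lemma tau_rpow_sub_one {θ : ℝ} (κ₀ κ₁ : ℝ) (hθ : θ ≠ 1) :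
    tau κ₀ κ₁ θ ^ (θ - 1) = Real.exp (tauRpowExponent κ₀ κ₁ θ) := by
  have h : 1 - θ ≠ 0 := sub_ne_zero.mpr hθ.symm
  rw [tau, Real.rpow_def_of_pos (Real.exp_pos _), Real.log_exp, tauRpowExponent]
  congr 1
  field_simp
  ring

lemma tauRpowExponent_eq_sub_sq (κ₀ θ : ℝ) {κ₁ : ℝ} (hκ₁ : κ₁ ≠ 0) :
    tauRpowExponent κ₀ κ₁ θ = tauRpowExponent κ₀ κ₁ (3/4 + (κ₀ + 1) / κ₁)
      - κ₁ / 2 * (θ - (3/4 + (κ₀ + 1) / κ₁)) ^ 2 := by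
  simp only [tauRpowExponent, rfun]
  field_simp
  ring

lemma tauRpowExponent_le (κ₀ θ : ℝ) {κ₁ : ℝ} (hκ₁ : 0 < κ₁) :
    tauRpowExponent κ₀ κ₁ θ ≤ tauRpowExponent κ₀ κ₁ (3/4 + (κ₀ + 1) / κ₁) := by
  rw [tauRpowExponent_eq_sub_sq κ₀ θ hκ₁.ne']
  have : 0 ≤ κ₁ / 2 * (θ - (3/4 + (κ₀ + 1) / κ₁)) ^ 2 := by positivity
  linarith

/-- The interior maximizer of `θ ↦ τ(θ)^{θ−1}` in the third case of formula (5.3):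
if `(κ₀+1)/κ₁ ∈ (−1/4,1/4)` and `θ* = 3/4 + (κ₀+1)/κ₁`, then `θ* ∈ (1/2,1)` and
`τ(θ)^{θ−1} ≤ τ(θ*)^{θ*−1}` for all `θ ∈ (1/2,1)`. -/
theorem tau_rpow_max_at_interior (κ₀ κ₁ : ℝ) (hκ₁ : 0 < κ₁)
    (hcase : (κ₀ + 1) / κ₁ ∈ Set.Ioo (-(1/4) : ℝ) (1/4)) :
    (3/4 + (κ₀ + 1) / κ₁) ∈ Set.Ioo (1/2 : ℝ) 1 ∧
      ∀ θ ∈ Set.Ioo (1/2 : ℝ) 1,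
        tau κ₀ κ₁ θ ^ (θ - 1) ≤
          tau κ₀ κ₁ (3/4 + (κ₀ + 1) / κ₁) ^ ((3/4 + (κ₀ + 1) / κ₁) - 1) := by
  obtain ⟨hlo, hhi⟩ := hcase
  have hmem : (3/4 + (κ₀ + 1) / κ₁) ∈ Set.Ioo (1/2 : ℝ) 1 := ⟨by linarith, by linarith⟩
  refine ⟨hmem, fun θ hθ => ?_⟩
  rw [tau_rpow_sub_one κ₀ κ₁ hθ.2.ne, tau_rpow_sub_one κ₀ κ₁ hmem.2.ne, Real.exp_le_exp]
  exact tauRpowExponent_le κ₀ θ hκ₁
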